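/- Let S, E, I, A, Q, H, R, M : ℝ → ℝ be differentiable functions satisfying the SEIAQHRM system for all t ≥ 0: S' = Λ - μS - η₂MS - η₁IS/N - ψη₁AS/N, E' = η₂MS + η₁IS/N + ψη₁AS/N - ((1-θ)ω + θρ + δ₁ + μ)E, I' = (1-θ)ωE - (τ₁ + ξ₁ + γ + μ)I, A' = θρE - (τ₂ + μ)A, Q' = δ₁E - (φ₁ + δ₂ + μ)Q, H' = γI + δ₂Q - (φ₂ + ξ₂ + μ)H, R' = τ₁I + τ₂A + φ₁Q + φ₂H - μR, where N(t) = S(t) + E(t) + I(t) + A(t) + Q(t) + H(t) + R(t) is assumed nonzero. Assume μ > 0, ξ₁ ≥ 0, ξ₂ ≥ 0, and I(t) ≥ 0 and H(t) ≥ 0 for all t ≥ 0. Then for every t ≥ 0, N(t) ≤ Λ/μ + (N(0) - Λ/μ)·exp(-μ·t). -/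

import Mathlib

/-- SEIAQHRM model (Nana-Kyere and Seidu): Grönwall-type bound
N(t) ≤ Λ/μ + (N(0) - Λ/μ)·exp(-μ·t) for the total population. -/
theorem stmt_7 (Λ μ η₁ η₂ ψ θ ω ρ δ₁ δ₂ τ₁ τ₂ ξ₁ ξ₂ γ φ₁ φ₂ : ℝ)
    (S E I A Q H R M N : ℝ → ℝ)
    (hM : Differentiable ℝ M)
    (hN : ∀ t : ℝ, N t = S t + E t + I t + A t + Q t + H t + R t)
    (hNne : ∀ t : ℝ, 0 ≤ t → N t ≠ 0)
    (hS : ∀ t : ℝ, 0 ≤ t → HasDerivAt S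
      (Λ - μ * S t - η₂ * M t * S t - η₁ * I t * S t / N t - ψ * η₁ * A t * S t / N t) t)
    (hE : ∀ t : ℝ, 0 ≤ t → HasDerivAt E
      (η₂ * M t * S t + η₁ * I t * S t / N t + ψ * η₁ * A t * S t / N t
        - ((1 - θ) * ω + θ * ρ + δ₁ + μ) * E t) t)
    (hI : ∀ t : ℝ, 0 ≤ t → HasDerivAt I
      ((1 - θ) * ω * E t - (τ₁ + ξ₁ + γ + μ) * I t) t)
    (hA : ∀ t : ℝ, 0 ≤ t → HasDerivAt A
      (θ * ρ * E t - (τ₂ + μ) * A t) t)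
    (hQ : ∀ t : ℝ, 0 ≤ t → HasDerivAt Q
      (δ₁ * E t - (φ₁ + δ₂ + μ) * Q t) t)
    (hH : ∀ t : ℝ, 0 ≤ t → HasDerivAt H
      (γ * I t + δ₂ * Q t - (φ₂ + ξ₂ + μ) * H t) t)
    (hR : ∀ t : ℝ, 0 ≤ t → HasDerivAt R
      (τ₁ * I t + τ₂ * A t + φ₁ * Q t + φ₂ * H t - μ * R t) t)
    (hμ : 0 < μ) (hξ₁ : 0 ≤ ξ₁) (hξ₂ : 0 ≤ ξ₂)
    (hIpos : ∀ t : ℝ, 0 ≤ t → 0 ≤ I t)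
    (hHpos : ∀ t : ℝ, 0 ≤ t → 0 ≤ H t) :
    ∀ t : ℝ, 0 ≤ t → N t ≤ Λ / μ + (N 0 - Λ / μ) * Real.exp (-μ * t) := by
  have hN' : ∀ t : ℝ, 0 ≤ t →
      HasDerivAt N (Λ - μ * N t - ξ₁ * I t - ξ₂ * H t) t := by
    intro t ht
    have h := ((((((hS t ht).add (hE t ht)).add (hI t ht)).add (hA t ht)).add
      (hQ t ht)).add (hH t ht)).add (hR t ht)
    have hfun : N = fun t => S t + E t + I t + A t + Q t + H t + R t := funext hN
    rw [hfun]
    convert h using 1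
    · rfl
    · rfl
    · rfl
    beta_reduce
    ring
  intro t₀ ht₀
  have key := le_gronwallBound_of_liminf_deriv_right_le
    (f := N) (f' := fun x => Λ - μ * N x - ξ₁ * I x - ξ₂ * H x)
    (δ := N 0) (K := -μ) (ε := Λ) (a := 0) (b := t₀)
    (fun x hx => (hN' x hx.1).continuousAt.continuousWithinAt)
    (fun x hx _r hr => ((hN' x hx.1).hasDerivWithinAt.liminf_right_slope_le hr))
    le_rfl
    (fun x hx => by
      have h1 : 0 ≤ ξ₁ * I x := mul_nonneg hξ₁ (hIpos x hx.1)
      have h2 : 0 ≤ ξ₂ * H x := mul_nonneg hξ₂ (hHpos x hx.1)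
      linarith)
    t₀ ⟨ht₀, le_rfl⟩
  rw [gronwallBound_of_K_ne_0 (neg_ne_zero.mpr hμ.ne')] at key
  simp only [sub_zero] at key
  have := hμ.ne'
  calc N t₀ ≤ N 0 * Real.exp (-μ * t₀) + Λ / -μ * (Real.exp (-μ * t₀) - 1) := key
    _ = Λ / μ + (N 0 - Λ / μ) * Real.exp (-μ * t₀) := by ring
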